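/- Let f : {0,1}ⁿ → ℝ satisfy condition (2.1) with constant v > 0, and for each positive integer k set a_k = Q_{1−2^{−k}}. Then for every integer m ≥ 1, a_m ≤ a_1 + 8·sqrt( v·(m−1) ). -/

import Mathlib

open scoped Classical
open Finset

/-- Probability of an event under the uniform distribution on `{0,1}ⁿ`. -/
noncomputable def prb {n : ℕ} (P : (Fin n → Fin 2) → Prop) : ℝ :=
  ((Finset.univ.filter P).card : ℝ) / 2 ^ n

/-- `x^{(i)}`: flip the `i`-th bit of `x`. -/
noncomputable def flipBit {n : ℕ} (x : Fin n → Fin 2) (i : Fin n) : Fin n → Fin 2 :=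
  Function.update x i (x i + 1)

/-- The `α`-quantile `Q_α = inf { z : P{f(X) ≤ z} ≥ α }`. -/
noncomputable def quant {n : ℕ} (f : (Fin n → Fin 2) → ℝ) (α : ℝ) : ℝ :=
  sInf {z : ℝ | α ≤ prb fun x => f x ≤ z}

/-- Expectation of `f(X)` for `X` uniform on `{0,1}ⁿ`. -/
noncomputable def expecb {n : ℕ} (f : (Fin n → Fin 2) → ℝ) : ℝ :=
  (∑ x, f x) / 2 ^ n

/-- Variance of `f(X)` for `X` uniform on `{0,1}ⁿ`. -/
noncomputable def varb {n : ℕ} (f : (Fin n → Fin 2) → ℝ) : ℝ :=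
  expecb fun x => (f x - expecb f) ^ 2


/-!
The one-sided condition controls the entropy of `e^{λf}`: tensorizing entropy over the coordinates
of the cube and bounding the entropy on each edge by `(λ (f(x) - f(x^{(i)})))₊² e^{λ f(x)} / 4`
gives `Ent(e^{λf}) ≤ (λ² v / 2) E e^{λf}` for `λ ≥ 0`, and Herbst's argument turns this into
`E e^{λ(f - E f)} ≤ e^{λ² v / 2}`. The same exponential bound, tested against
`e^t ≥ 1 + t + t₊² / 2`, gives `E (f - E f)₊² ≤ (e - 1) v`, so the mean exceeds the median `a₁` by
at most `3 √v`; a Chernoff bound at `a₁ + 8 √(v (m - 1))` is then below `2^{-m}`.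
-/

open Real Filter Topology
open scoped BigOperators

section Expectation

variable {n : ℕ}

lemma expecb_eq_expect (g : (Fin n → Fin 2) → ℝ) : expecb g = 𝔼 x, g x := by
  simp [expecb, Fintype.expect_eq_sum_div_card]

lemma expecb_add (g h : (Fin n → Fin 2) → ℝ) :
    expecb (fun x => g x + h x) = expecb g + expecb h := by
  simp only [expecb_eq_expect, expect_add_distrib]

lemma expecb_const_mul (g : (Fin n → Fin 2) → ℝ) (c : ℝ) :
    expecb (fun x => c * g x) = c * expecb g := by
  simp only [expecb_eq_expect, mul_expect]

lemma expecb_mul_const (g : (Fin n → Fin 2) → ℝ) (c : ℝ) :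
    expecb (fun x => g x * c) = expecb g * c := by
  simp only [expecb_eq_expect, expect_mul]

lemma expecb_const (c : ℝ) : expecb (fun _ : Fin n → Fin 2 => c) = c := by
  simp only [expecb_eq_expect, Fintype.expect_const]

lemma expecb_mono {g h : (Fin n → Fin 2) → ℝ} (hgh : ∀ x, g x ≤ h x) : expecb g ≤ expecb h := by
  simp only [expecb_eq_expect]
  exact expect_le_expect fun x _ => hgh x

lemma expecb_nonneg {g : (Fin n → Fin 2) → ℝ} (hg : ∀ x, 0 ≤ g x) : 0 ≤ expecb g := by
  simpa only [expecb_const] using expecb_mono hg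

lemma expecb_pos {g : (Fin n → Fin 2) → ℝ} (hg : ∀ x, 0 < g x) : 0 < expecb g := by
  simp only [expecb_eq_expect]
  exact expect_pos (fun x _ => hg x) univ_nonempty

lemma sq_expecb_le_expecb_sq (g : (Fin n → Fin 2) → ℝ) :
    expecb g ^ 2 ≤ expecb fun x => g x ^ 2 := by
  simpa [expecb] using sum_div_card_sq_le_sum_sq_div_card (s := univ) (f := g)

lemma expecb_succ (g : (Fin (n + 1) → Fin 2) → ℝ) :
    expecb g = (expecb (fun y => g (Fin.cons 0 y)) + expecb (fun y => g (Fin.cons 1 y))) / 2 := by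
  have hsum : ∑ x, g x = ∑ y, g (Fin.cons 0 y) + ∑ y, g (Fin.cons 1 y) := by
    rw [← (Fin.consEquiv fun _ => Fin 2).sum_comp, Fintype.sum_prod_type, Fin.sum_univ_two]
    rfl
  rw [expecb, hsum, expecb, expecb, pow_succ]
  ring

end Expectation

section Flips

variable {n : ℕ}

@[simp]
lemma flipBit_flipBit (x : Fin n → Fin 2) (i : Fin n) : flipBit (flipBit x i) i = x := by
  have h : ∀ b : Fin 2, b + 1 + 1 = b := by decide
  simp [flipBit, h]

lemma expecb_sum_flipBit (g : (Fin n → Fin 2) → Fin n → ℝ) :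
    (expecb fun x => ∑ i, g (flipBit x i) i) = expecb fun x => ∑ i, g x i := by
  simp only [expecb]
  rw [sum_comm, sum_comm (f := fun x i => g x i)]
  congr 1
  refine sum_congr rfl fun i _ => ?_
  exact Fintype.sum_bijective (flipBit · i)
    (Function.Involutive.bijective fun x => flipBit_flipBit x i) _ _ fun _ => rfl

lemma sum_flipBit_cons (G : (Fin (n + 1) → Fin 2) → ℝ) (b : Fin 2) (y : Fin n → Fin 2) :
    ∑ i, G (flipBit (Fin.cons b y) i)
      = G (Fin.cons (b + 1) y) + ∑ i, G (Fin.cons b (flipBit y i)) := by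
  simp [Fin.sum_univ_succ, flipBit, Fin.cons_update]

end Flips

section Entropy

noncomputable def entb {n : ℕ} (g : (Fin n → Fin 2) → ℝ) : ℝ :=
  expecb (fun x => g x * log (g x)) - expecb g * log (expecb g)

/-- The entropy of the function taking the values `p` and `q` on a single uniform bit. -/
noncomputable def ent2 (p q : ℝ) : ℝ :=
  (p * log p + q * log q) / 2 - (p + q) / 2 * log ((p + q) / 2)

lemma ent2_comm (p q : ℝ) : ent2 p q = ent2 q p := by
  simp only [ent2, add_comm]

lemma ent2_eq_of_pos {A B : ℝ} (hA : 0 < A) (hB : 0 < B) :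
    ent2 A B = (A * log (2 * A / (A + B)) + B * log (2 * B / (A + B))) / 2 := by
  have hAB : A + B ≠ 0 := by positivity
  rw [ent2, log_div (by positivity) hAB, log_div (by positivity) hAB, log_mul two_ne_zero hA.ne',
    log_mul two_ne_zero hB.ne', log_div hAB two_ne_zero]
  ring

/-- As `(e^a + e^b) / 2 = 1` for `a = log (2A/(A+B))`, `b = log (2B/(A+B))`, this is the variational
formula `Ent(g) = sup {E[g h] : E[e^h] = 1}` on one bit; it makes `ent2` jointly convex. -/
lemma mul_log_add_mul_log_le_ent2 {p q A B : ℝ} (hp : 0 < p) (hq : 0 < q) (hA : 0 < A)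
    (hB : 0 < B) :
    (p * log (2 * A / (A + B)) + q * log (2 * B / (A + B))) / 2 ≤ ent2 p q := by
  set s := (p + q) / 2
  have young : ∀ r g : ℝ, 0 < r → 0 < g →
      r * log g ≤ s * g - r + r * log r - r * log s := by
    intro r g hr hg
    have h := mul_le_mul_of_nonneg_left (log_le_sub_one_of_pos (x := s * g / r) (by positivity))
      hr.le
    rw [log_div (by positivity) hr.ne', log_mul (by positivity) hg.ne'] at h
    have hr' : r * (s * g / r - 1) = s * g - r := by field_simp
    linarith
  have hsum : s * (2 * A / (A + B)) + s * (2 * B / (A + B)) = p + q := by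
    field_simp
    ring
  have hyp := young p (2 * A / (A + B)) hp (by positivity)
  have hyq := young q (2 * B / (A + B)) hq (by positivity)
  have hs : (p + q) / 2 * log ((p + q) / 2) = s * log s := rfl
  rw [ent2]
  linarith

lemma ent2_expecb_le {n : ℕ} {h₀ h₁ : (Fin n → Fin 2) → ℝ} (h₀pos : ∀ y, 0 < h₀ y)
    (h₁pos : ∀ y, 0 < h₁ y) :
    ent2 (expecb h₀) (expecb h₁) ≤ expecb fun y => ent2 (h₀ y) (h₁ y) := by
  have hA := expecb_pos h₀pos
  have hB := expecb_pos h₁pos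
  set a := log (2 * expecb h₀ / (expecb h₀ + expecb h₁))
  set b := log (2 * expecb h₁ / (expecb h₀ + expecb h₁))
  have hlin :
      (expecb fun y => (h₀ y * a + h₁ y * b) / 2) = (expecb h₀ * a + expecb h₁ * b) / 2 := by
    simp only [add_div, mul_div_assoc, expecb_add, expecb_mul_const]
  rw [ent2_eq_of_pos hA hB, ← hlin]
  exact expecb_mono fun y => mul_log_add_mul_log_le_ent2 (h₀pos y) (h₁pos y) hA hB

lemma entb_fin_zero (g : (Fin 0 → Fin 2) → ℝ) : entb g = 0 := by
  simp [entb, expecb]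

lemma entb_succ {n : ℕ} (g : (Fin (n + 1) → Fin 2) → ℝ) :
    entb g = (entb (fun y => g (Fin.cons 0 y)) + entb (fun y => g (Fin.cons 1 y))) / 2
      + ent2 (expecb fun y => g (Fin.cons 0 y)) (expecb fun y => g (Fin.cons 1 y)) := by
  rw [entb, expecb_succ g, expecb_succ (fun x => g x * log (g x)), entb, entb, ent2]
  ring

theorem entb_le_expecb_sum_ent2 {n : ℕ} {g : (Fin n → Fin 2) → ℝ} (hg : ∀ x, 0 < g x) :
    entb g ≤ expecb fun x => ∑ i, ent2 (g x) (g (flipBit x i)) := by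
  induction n with
  | zero => simp [entb_fin_zero, expecb_const]
  | succ n ih =>
    have hsplit : ∀ b y, ∑ i, ent2 (g (Fin.cons b y)) (g (flipBit (Fin.cons b y) i)) =
        ent2 (g (Fin.cons b y)) (g (Fin.cons (b + 1) y))
          + ∑ i, ent2 (g (Fin.cons b y)) (g (Fin.cons b (flipBit y i))) :=
      fun b y => sum_flipBit_cons (fun z => ent2 _ (g z)) b y
    have h11 : (1 : Fin 2) + 1 = 0 := rfl
    have h₀ := ih fun y => hg (Fin.cons 0 y)
    have h₁ := ih fun y => hg (Fin.cons 1 y)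
    have hjensen := ent2_expecb_le (fun y => hg (Fin.cons 0 y)) (fun y => hg (Fin.cons 1 y))
    rw [entb_succ, expecb_succ]
    simp only [hsplit, zero_add, h11, expecb_add]
    simp only [ent2_comm (g (Fin.cons 1 _)) (g (Fin.cons 0 _))]
    linarith

end Entropy

section LogSobolev

lemma ent2_exp_le_of_le {u w : ℝ} (hwu : w ≤ u) :
    ent2 (exp u) (exp w) ≤ (u - w) ^ 2 * exp u / 4 := by
  have hmid : (u + w) / 2 ≤ log ((exp u + exp w) / 2) := by
    have h := convexOn_exp.2 (Set.mem_univ u) (Set.mem_univ w) (by norm_num : (0 : ℝ) ≤ 1 / 2)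
      (by norm_num : (0 : ℝ) ≤ 1 / 2) (by norm_num)
    simp only [smul_eq_mul] at h
    rw [le_log_iff_exp_le (by positivity)]
    calc exp ((u + w) / 2) = exp (1 / 2 * u + 1 / 2 * w) := by ring_nf
      _ ≤ 1 / 2 * exp u + 1 / 2 * exp w := h
      _ = (exp u + exp w) / 2 := by ring
  have hdiff : exp u - exp w ≤ (u - w) * exp u := by
    have h := mul_le_mul_of_nonneg_left (add_one_le_exp (w - u)) (exp_pos u).le
    rw [← exp_add, add_sub_cancel] at h
    linarith
  calc ent2 (exp u) (exp w)
      ≤ (exp u * u + exp w * w) / 2 - (exp u + exp w) / 2 * ((u + w) / 2) := by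
        rw [ent2, log_exp, log_exp]
        gcongr
    _ = (u - w) * (exp u - exp w) / 4 := by ring
    _ ≤ (u - w) * ((u - w) * exp u) / 4 := by gcongr
    _ = (u - w) ^ 2 * exp u / 4 := by ring

lemma ent2_exp_le (u w : ℝ) :
    ent2 (exp u) (exp w) ≤ max (u - w) 0 ^ 2 * exp u / 4 + max (w - u) 0 ^ 2 * exp w / 4 := by
  rcases le_total w u with h | h
  · rw [max_eq_left (sub_nonneg.2 h), max_eq_right (sub_nonpos.2 h)]
    simpa using ent2_exp_le_of_le h
  · rw [max_eq_right (sub_nonpos.2 h), max_eq_left (sub_nonneg.2 h), ent2_comm]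
    simpa using ent2_exp_le_of_le h

lemma max_mul_zero_sq {l : ℝ} (hl : 0 ≤ l) (a : ℝ) :
    max (l * a) 0 ^ 2 = l ^ 2 * max a 0 ^ 2 := by
  rw [← mul_zero l, ← mul_max_of_nonneg _ _ hl, mul_zero, mul_pow]

variable {n : ℕ} {f : (Fin n → Fin 2) → ℝ} {v : ℝ}

lemma sum_max_mul_sub_sq_le (hcond : ∀ x, ∑ i, max (f x - f (flipBit x i)) 0 ^ 2 ≤ v)
    {l : ℝ} (hl : 0 ≤ l) (x : Fin n → Fin 2) :
    ∑ i, max (l * f x - l * f (flipBit x i)) 0 ^ 2 ≤ l ^ 2 * v := by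
  simp_rw [← mul_sub, max_mul_zero_sq hl, ← mul_sum]
  exact mul_le_mul_of_nonneg_left (hcond x) (sq_nonneg l)

/-- The modified logarithmic Sobolev inequality for `e^{l f}`. -/
theorem entb_exp_mul_le (hcond : ∀ x, ∑ i, max (f x - f (flipBit x i)) 0 ^ 2 ≤ v)
    {l : ℝ} (hl : 0 ≤ l) :
    entb (fun x => exp (l * f x)) ≤ l ^ 2 * v / 2 * expecb fun x => exp (l * f x) := by
  set A : (Fin n → Fin 2) → Fin n → ℝ := fun x i =>
    max (l * f x - l * f (flipBit x i)) 0 ^ 2 * exp (l * f x) / 4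
  have hflip : (expecb fun x => ∑ i, A (flipBit x i) i) = expecb fun x => ∑ i, A x i :=
    expecb_sum_flipBit A
  have hA : ∀ x, ∑ i, A x i ≤ l ^ 2 * v / 4 * exp (l * f x) := fun x => by
    simp only [A, ← sum_div, ← sum_mul]
    have := mul_le_mul_of_nonneg_right (sum_max_mul_sub_sq_le hcond hl x) (exp_pos (l * f x)).le
    linarith
  calc entb (fun x => exp (l * f x))
      ≤ expecb fun x => ∑ i, ent2 (exp (l * f x)) (exp (l * f (flipBit x i))) :=
        entb_le_expecb_sum_ent2 fun x => exp_pos _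
    _ ≤ expecb fun x => ∑ i, (A x i + A (flipBit x i) i) :=
        expecb_mono fun x => sum_le_sum fun i _ => by simpa [A] using ent2_exp_le _ _
    _ = 2 * expecb fun x => ∑ i, A x i := by
        simp only [sum_add_distrib, expecb_add, hflip]
        ring
    _ ≤ 2 * expecb fun x => l ^ 2 * v / 4 * exp (l * f x) := by gcongr; exact expecb_mono hA
    _ = l ^ 2 * v / 2 * expecb fun x => exp (l * f x) := by rw [expecb_const_mul]; ring

end LogSobolev

section Herbst

variable {M D : ℝ → ℝ} {v : ℝ}

lemma antitoneOn_log_div_sub (hM : ∀ t, HasDerivAt M (D t) t) (hMpos : ∀ t, 0 < M t)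
    (hent : ∀ t, 0 < t → t * D t - M t * log (M t) ≤ t ^ 2 * v / 2 * M t) :
    AntitoneOn (fun t => log (M t) / t - v / 2 * t) (Set.Ioi 0) := by
  have hderiv : ∀ t, 0 < t → HasDerivAt (fun t => log (M t) / t - v / 2 * t)
      ((D t / M t * t - log (M t) * 1) / t ^ 2 - v / 2 * 1) t := fun t ht =>
    (((hM t).log (hMpos t).ne').div (hasDerivAt_id t) ht.ne').sub
      ((hasDerivAt_id t).const_mul (v / 2))
  refine antitoneOn_of_hasDerivWithinAt_nonpos (convex_Ioi 0)
    (fun t ht => (hderiv t ht).continuousAt.continuousWithinAt)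
    (fun t ht => (hderiv t (interior_subset ht)).hasDerivWithinAt) fun t ht => ?_
  rw [interior_Ioi] at ht
  have ht : (0 : ℝ) < t := ht
  have hMt := hMpos t
  have hderiv_eq : (D t / M t * t - log (M t) * 1) / t ^ 2
      = (t * D t - M t * log (M t)) / M t / t ^ 2 := by
    field_simp
  have hle : (t * D t - M t * log (M t)) / M t / t ^ 2 ≤ v / 2 := by
    rw [div_le_iff₀ (by positivity), div_le_iff₀ hMt]
    linarith [hent t ht]
  linarith

lemma tendsto_log_div_nhdsGT {d : ℝ} (hM : HasDerivAt M d 0) (hM0 : M 0 = 1) :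
    Tendsto (fun t => log (M t) / t) (𝓝[>] 0) (𝓝 d) := by
  have h := ((hM.log (by simp [hM0])).tendsto_slope_zero_right)
  simpa [hM0, div_eq_inv_mul] using h

/-- Herbst's argument, for `M` the moment generating function of some `F` and `D = M'`: the
entropy bound makes `log (M t) / t - v t / 2` nonincreasing, and it tends to `E F = D 0` at `0+`. -/
theorem le_exp_of_entropy_le (hM : ∀ t, HasDerivAt M (D t) t) (hMpos : ∀ t, 0 < M t)
    (hM0 : M 0 = 1) (hent : ∀ t, 0 < t → t * D t - M t * log (M t) ≤ t ^ 2 * v / 2 * M t)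
    {l : ℝ} (hl : 0 ≤ l) :
    M l ≤ exp (l * D 0 + v * l ^ 2 / 2) := by
  rcases hl.eq_or_lt with rfl | hlpos
  · simp [hM0]
  have hlim : Tendsto (fun t => log (M t) / t - v / 2 * t) (𝓝[>] 0) (𝓝 (D 0)) := by
    have hlin : Tendsto (fun t : ℝ => v / 2 * t) (𝓝[>] 0) (𝓝 0) := by
      simpa using ((continuous_const_mul (v / 2)).tendsto 0).mono_left nhdsWithin_le_nhds
    simpa using (tendsto_log_div_nhdsGT (hM 0) hM0).sub hlin
  have hU : log (M l) / l - v / 2 * l ≤ D 0 := by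
    refine ge_of_tendsto hlim ?_
    filter_upwards [Ioc_mem_nhdsGT hlpos] with t ht
    exact antitoneOn_log_div_sub hM hMpos hent ht.1 hlpos ht.2
  have h := (div_le_iff₀ hlpos).1 (show log (M l) / l ≤ D 0 + v / 2 * l by linarith)
  rw [← exp_log (hMpos l), exp_le_exp]
  linarith

end Herbst

section Concentration

variable {n : ℕ} {f : (Fin n → Fin 2) → ℝ} {v : ℝ}

lemma hasDerivAt_expecb_exp_mul (f : (Fin n → Fin 2) → ℝ) (t : ℝ) :
    HasDerivAt (fun t => expecb fun x => exp (t * f x))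
      (expecb fun x => f x * exp (t * f x)) t := by
  simp only [expecb]
  refine (HasDerivAt.fun_sum fun x _ => ?_).div_const _
  simpa [mul_comm] using ((hasDerivAt_id t).mul_const (f x)).exp

theorem expecb_exp_mul_le (hcond : ∀ x, ∑ i, max (f x - f (flipBit x i)) 0 ^ 2 ≤ v)
    {l : ℝ} (hl : 0 ≤ l) :
    (expecb fun x => exp (l * f x)) ≤ exp (l * expecb f + v * l ^ 2 / 2) := by
  have hD0 : (expecb fun x => f x * exp (0 * f x)) = expecb f := by simp
  rw [← hD0]
  refine le_exp_of_entropy_le (hasDerivAt_expecb_exp_mul f)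
    (fun t => expecb_pos fun x => exp_pos _) (by simp [expecb_const]) (fun t ht => ?_) hl
  have h := entb_exp_mul_le hcond ht.le
  simp only [entb, log_exp] at h
  convert h using 2
  rw [← expecb_const_mul]
  congr 1
  ext x
  ring

lemma prb_lt_le_expecb_exp (f : (Fin n → Fin 2) → ℝ) (z : ℝ) {l : ℝ} (hl : 0 ≤ l) :
    prb (fun x => z < f x) ≤ expecb fun x => exp (l * (f x - z)) := by
  rw [prb, expecb]
  gcongr
  calc (#(univ.filter fun x => z < f x) : ℝ) = ∑ x ∈ univ.filter fun x => z < f x, 1 := by simp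
    _ ≤ ∑ x ∈ univ.filter fun x => z < f x, exp (l * (f x - z)) :=
        sum_le_sum fun x hx => one_le_exp (mul_nonneg hl (sub_nonneg.2 (mem_filter.1 hx).2.le))
    _ ≤ ∑ x, exp (l * (f x - z)) :=
        sum_le_sum_of_subset_of_nonneg (filter_subset _ _) fun _ _ _ => (exp_pos _).le

theorem prb_expecb_add_lt_le (hv : 0 < v)
    (hcond : ∀ x, ∑ i, max (f x - f (flipBit x i)) 0 ^ 2 ≤ v) {t : ℝ} (ht : 0 ≤ t) :
    prb (fun x => expecb f + t < f x) ≤ exp (-(t ^ 2 / (2 * v))) := by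
  set l := t / v
  calc prb (fun x => expecb f + t < f x)
      ≤ expecb fun x => exp (l * (f x - (expecb f + t))) := prb_lt_le_expecb_exp f _ (by positivity)
    _ = (expecb fun x => exp (l * f x)) * exp (-(l * (expecb f + t))) := by
        rw [← expecb_mul_const]
        congr 1
        ext x
        rw [← exp_add]
        ring_nf
    _ ≤ exp (l * expecb f + v * l ^ 2 / 2) * exp (-(l * (expecb f + t))) := by
        gcongr
        exact expecb_exp_mul_le hcond (by positivity)
    _ = exp (-(t ^ 2 / (2 * v))) := by
        rw [← exp_add]
        congr 1
        simp only [l]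
        field_simp
        ring

end Concentration

section Quantile

variable {n : ℕ}

lemma prb_le_eq_one_sub_prb_lt (f : (Fin n → Fin 2) → ℝ) (z : ℝ) :
    prb (fun x => f x ≤ z) = 1 - prb (fun x => z < f x) := by
  rw [eq_sub_iff_add_eq, prb, prb, ← add_div, div_eq_one_iff_eq (by positivity)]
  simp only [← not_le]
  rw [← Nat.cast_add, card_filter_add_card_filter_not]
  simp

lemma isClosed_setOf_le_prb (f : (Fin n → Fin 2) → ℝ) (α : ℝ) :
    IsClosed {z : ℝ | α ≤ prb fun x => f x ≤ z} := by
  have h : (fun z => prb fun x => f x ≤ z) =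
      fun z => ∑ x, (Set.Ici (f x)).indicator (fun _ => ((2 : ℝ) ^ n)⁻¹) z := by
    ext z
    rw [prb, natCast_card_filter, sum_div]
    refine sum_congr rfl fun x _ => ?_
    by_cases hx : f x ≤ z <;> simp [hx]
  have husc : UpperSemicontinuous fun z => prb fun x => f x ≤ z := by
    rw [h]
    exact upperSemicontinuous_sum fun x _ =>
      isClosed_Ici.upperSemicontinuous_indicator (by positivity)
  exact husc.isClosed_preimage α

lemma bddBelow_setOf_le_prb (f : (Fin n → Fin 2) → ℝ) {α : ℝ} (hα : 0 < α) :
    BddBelow {z : ℝ | α ≤ prb fun x => f x ≤ z} := by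
  refine ⟨univ.inf' univ_nonempty f, fun z hz => ?_⟩
  obtain ⟨x, hx⟩ : ∃ x, f x ≤ z := by
    by_contra! h
    simp [prb, filter_false_of_mem fun x _ => not_le.2 (h x)] at hz
    linarith
  exact (inf'_le f (mem_univ x)).trans hx

lemma quant_le {f : (Fin n → Fin 2) → ℝ} {α z : ℝ} (hα : 0 < α)
    (hz : α ≤ prb fun x => f x ≤ z) : quant f α ≤ z :=
  csInf_le (bddBelow_setOf_le_prb f hα) hz

lemma le_prb_le_quant (f : (Fin n → Fin 2) → ℝ) {α : ℝ} (hα₀ : 0 < α) (hα₁ : α ≤ 1) :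
    α ≤ prb fun x => f x ≤ quant f α := by
  refine (isClosed_setOf_le_prb f α).csInf_mem ⟨univ.sup' univ_nonempty f, ?_⟩
    (bddBelow_setOf_le_prb f hα₀)
  have hall : univ.filter (fun x => f x ≤ univ.sup' univ_nonempty f) = univ :=
    filter_true_of_mem fun x _ => le_sup' f (mem_univ x)
  show α ≤ prb fun x => f x ≤ univ.sup' univ_nonempty f
  rw [prb, hall]
  simpa using hα₁

end Quantile

section MeanMedian

variable {n : ℕ} {f : (Fin n → Fin 2) → ℝ} {v : ℝ}

lemma mul_prb_le_expecb_max (f : (Fin n → Fin 2) → ℝ) (c z : ℝ) :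
    (c - z) * prb (fun x => f x ≤ z) ≤ expecb fun x => max (c - f x) 0 := by
  rw [prb, expecb, mul_div_assoc']
  gcongr
  calc (c - z) * #(univ.filter fun x => f x ≤ z) = ∑ x ∈ univ.filter fun x => f x ≤ z, (c - z) := by
        rw [sum_const, nsmul_eq_mul, mul_comm]
    _ ≤ ∑ x ∈ univ.filter fun x => f x ≤ z, max (c - f x) 0 :=
        sum_le_sum fun x hx => le_max_of_le_left (by linarith [(mem_filter.1 hx).2])
    _ ≤ ∑ x, max (c - f x) 0 :=
        sum_le_sum_of_subset_of_nonneg (filter_subset _ _) fun _ _ _ => le_max_right _ _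

lemma expecb_max_sub_comm (f : (Fin n → Fin 2) → ℝ) :
    (expecb fun x => max (expecb f - f x) 0) = expecb fun x => max (f x - expecb f) 0 := by
  have h : ∀ x, max (expecb f - f x) 0 = max (f x - expecb f) 0 + (-1) * f x + expecb f := by
    intro x
    rcases le_total (f x) (expecb f) with h | h
    · rw [max_eq_left (by linarith), max_eq_right (by linarith)]; ring
    · rw [max_eq_right (by linarith), max_eq_left (by linarith)]; ring
  simp_rw [h, expecb_add, expecb_const_mul, expecb_const]
  ring

lemma expecb_le_quant_half_add (f : (Fin n → Fin 2) → ℝ) :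
    expecb f ≤ quant f (1 / 2) + 2 * expecb fun x => max (f x - expecb f) 0 := by
  have hmarkov := mul_prb_le_expecb_max f (expecb f) (quant f (1 / 2))
  rw [expecb_max_sub_comm] at hmarkov
  have hmed := le_prb_le_quant f (by norm_num : (0 : ℝ) < 1 / 2) (by norm_num)
  have hpos : 0 ≤ expecb fun x => max (f x - expecb f) 0 := expecb_nonneg fun _ => le_max_right _ _
  rcases le_total (expecb f) (quant f (1 / 2)) with h | h
  · linarith
  · nlinarith [mul_le_mul_of_nonneg_left hmed (sub_nonneg.2 h)]

lemma one_add_add_sq_max_le_exp (t : ℝ) : 1 + t + max t 0 ^ 2 / 2 ≤ exp t := by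
  rcases le_total 0 t with h | h
  · rw [max_eq_left h]
    exact quadratic_le_exp_of_nonneg h
  · rw [max_eq_right h]
    simpa [add_comm] using add_one_le_exp t

lemma expecb_sq_max_sub_le (hv : 0 < v)
    (hcond : ∀ x, ∑ i, max (f x - f (flipBit x i)) 0 ^ 2 ≤ v) :
    (expecb fun x => max (f x - expecb f) 0 ^ 2) ≤ (exp 1 - 1) * v := by
  set Q := expecb fun x => max (f x - expecb f) 0 ^ 2
  set l := √(2 / v)
  have hl : 0 ≤ l := sqrt_nonneg _
  have hl2 : l ^ 2 = 2 / v := sq_sqrt (by positivity)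
  have hpt : ∀ x, (1 - l * expecb f) + l * f x + l ^ 2 / 2 * max (f x - expecb f) 0 ^ 2
      ≤ exp (l * f x) * exp (-(l * expecb f)) := fun x => by
    have h := one_add_add_sq_max_le_exp (l * (f x - expecb f))
    rw [max_mul_zero_sq hl] at h
    rw [← exp_add]
    convert h using 1 <;> ring_nf
  have hlow : 1 + Q / v ≤ (expecb fun x => exp (l * f x)) * exp (-(l * expecb f)) := by
    have h := expecb_mono hpt
    simp_rw [expecb_add, expecb_const, expecb_const_mul, expecb_mul_const, hl2] at h
    convert h using 1
    field_simp
    ring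
  have hup : (expecb fun x => exp (l * f x)) * exp (-(l * expecb f)) ≤ exp 1 := by
    calc (expecb fun x => exp (l * f x)) * exp (-(l * expecb f))
        ≤ exp (l * expecb f + v * l ^ 2 / 2) * exp (-(l * expecb f)) := by
          gcongr
          exact expecb_exp_mul_le hcond hl
      _ = exp 1 := by
          rw [← exp_add, hl2]
          congr 1
          field_simp
          ring
  have hQ : Q / v ≤ exp 1 - 1 := by linarith
  rwa [div_le_iff₀ hv] at hQ

theorem expecb_le_quant_half_add_three_mul_sqrt (hv : 0 < v)
    (hcond : ∀ x, ∑ i, max (f x - f (flipBit x i)) 0 ^ 2 ≤ v) :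
    expecb f ≤ quant f (1 / 2) + 3 * √v := by
  have hE : (expecb fun x => max (f x - expecb f) 0) ≤ 3 / 2 * √v := by
    rw [← pow_le_pow_iff_left₀ (expecb_nonneg fun _ => le_max_right _ _) (by positivity)
      two_ne_zero]
    calc (expecb fun x => max (f x - expecb f) 0) ^ 2
        ≤ expecb fun x => max (f x - expecb f) 0 ^ 2 := sq_expecb_le_expecb_sq _
      _ ≤ (exp 1 - 1) * v := expecb_sq_max_sub_le hv hcond
      _ ≤ (3 / 2 * √v) ^ 2 := by
          rw [mul_pow, sq_sqrt hv.le]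
          nlinarith [exp_one_lt_d9]
  linarith [expecb_le_quant_half_add f]

theorem prb_quant_half_add_lt_le (hv : 0 < v)
    (hcond : ∀ x, ∑ i, max (f x - f (flipBit x i)) 0 ^ 2 ≤ v) {t : ℝ} (ht : 3 * √v ≤ t) :
    prb (fun x => quant f (1 / 2) + t < f x) ≤ exp (-((t - 3 * √v) ^ 2 / (2 * v))) := by
  have hmean := expecb_le_quant_half_add_three_mul_sqrt hv hcond
  calc prb (fun x => quant f (1 / 2) + t < f x)
      ≤ prb (fun x => expecb f + (t - 3 * √v) < f x) := by
        refine div_le_div_of_nonneg_right ?_ (by positivity)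
        exact_mod_cast card_le_card fun x hx => by
          simp only [mem_filter, mem_univ, true_and] at hx ⊢
          linarith
    _ ≤ exp (-((t - 3 * √v) ^ 2 / (2 * v))) := prb_expecb_add_lt_le hv hcond (by linarith)

end MeanMedian

theorem stmt_3 {n : ℕ} (f : (Fin n → Fin 2) → ℝ) (v : ℝ) (hv : 0 < v)
    (hcond : ∀ x, ∑ i, (max (f x - f (flipBit x i)) 0) ^ 2 ≤ v)
    (a : ℕ → ℝ) (ha : ∀ k, a k = quant f (1 - (1 / 2) ^ k))
    (m : ℕ) (hm : 1 ≤ m) :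
    a m ≤ a 1 + 8 * Real.sqrt (v * ((m : ℝ) - 1)) := by
  obtain rfl | hlt := hm.eq_or_lt
  · simp
  have hm₂ : (2 : ℝ) ≤ m := by exact_mod_cast hlt
  set s := √(v * ((m : ℝ) - 1))
  have hs : √v ≤ s := sqrt_le_sqrt (le_mul_of_one_le_right hv.le (by linarith))
  have hs₂ : s ^ 2 = v * ((m : ℝ) - 1) := sq_sqrt (by nlinarith)
  have htail : prb (fun x => a 1 + 8 * s < f x) ≤ (1 / 2) ^ m := by
    rw [ha 1, show (1 : ℝ) - (1 / 2) ^ 1 = 1 / 2 by norm_num]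
    calc prb (fun x => quant f (1 / 2) + 8 * s < f x) ≤ exp (-((8 * s - 3 * √v) ^ 2 / (2 * v))) :=
          prb_quant_half_add_lt_le hv hcond (by linarith [sqrt_nonneg v])
      _ ≤ exp (-(25 * ((m : ℝ) - 1) / 2)) := by
          rw [exp_le_exp, neg_le_neg_iff, div_le_div_iff₀ (by norm_num) (by positivity)]
          nlinarith [sqrt_nonneg v]
      _ ≤ (1 / 2) ^ m := by
          rw [← exp_log (by positivity : (0 : ℝ) < (1 / 2) ^ m), log_pow, one_div, log_inv,
            exp_le_exp]
          nlinarith [log_two_lt_d9]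
  have hα : (0 : ℝ) < 1 - (1 / 2) ^ m :=
    sub_pos.2 (pow_lt_one₀ (by norm_num) (by norm_num) (by omega))
  rw [ha m]
  refine quant_le hα ?_
  linarith [prb_le_eq_one_sub_prb_lt f (a 1 + 8 * s)]
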